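/- A complete minimal system {x_k} in H is hereditarily complete if and only if the set of projections Ω = {P_σ : σ ⊆ ℕ} is compact in the strong operator topology (equivalently, in the metric d_s(P,Q) = Σ_k ‖(P−Q)x_k‖/2^k). -/

import Mathlib

open Filter Topology

noncomputable section

variable {H : Type*} [NormedAddCommGroup H] [InnerProductSpace ℂ H] [CompleteSpace H]

/-- Closed linear span of a set of vectors. -/
def clSpan (s : Set H) : Submodule ℂ H := (Submodule.span ℂ s).topologicalClosure

instance (s : Set H) : CompleteSpace (clSpan s) :=
  (Submodule.isClosed_topologicalClosure _).completeSpace_coe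

/-- Orthogonal projection onto the closed linear span of `s`, as a map `H → H`. -/
def projS (s : Set H) : H →L[ℂ] H :=
  (clSpan s).subtypeL ∘L (clSpan s).orthogonalProjection

/-- The system `x` is complete: its closed linear span is all of `H`. -/
def IsCompleteSystem (x : ℕ → H) : Prop := clSpan (Set.range x) = ⊤

/-- The system `x` is minimal: no vector lies in the closed span of the others. -/
def IsMinimalSystem (x : ℕ → H) : Prop :=
  ∀ k, x k ∉ clSpan (x '' {j | j ≠ k})

/-- `y` is biorthogonal to `x`. -/
def IsBiorthogonal (x y : ℕ → H) : Prop :=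
  ∀ k j, (inner ℂ (x k) (y j) : ℂ) = if k = j then 1 else 0

/-!
Write `P_σ` for the projection onto the closed span of `x '' σ`.

If `x '' σ₀ ∪ y '' σ₀ᶜ` spans `H`, then `σ ↦ P_σ v` is continuous at `σ₀` for the product
topology on `Set ℕ ≃ (ℕ → Bool)`: on each generator it is locally constant (`P_σ x_k = x_k` for
`k ∈ σ`, `P_σ y_k = 0` for `k ∉ σ`), and the `P_σ` are uniformly `1`-Lipschitz. So hereditary
completeness makes `Ω` a continuous image of the Cantor space.

Conversely, let `v ⊥ x '' N ∪ y '' Nᶜ` and take a cluster point `P_τ` of `P_{N ∪ [n, ∞)}`.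
Every `w ⊥ x '' (N ∪ [n, ∞))` is `∑_{j < n} ⟪x_j, w⟫ y_j` by completeness, hence `w ⊥ v`; so
`P_{N ∪ [n, ∞)} v = v` for all `n`, and `P_τ v = v`. Since `P_{N ∪ [n, ∞)} y_k` vanishes for
`k ∉ N` and `n > k`, also `P_τ y_k = 0`, which forces `τ ⊆ N`. Then `v ∈ clSpan (x '' N)` and
`v ⊥ x '' N`, so `v = 0`.
-/

local notation "⟪" a ", " b "⟫" => @inner ℂ _ _ a b

def IsHereditarilyComplete (x y : ℕ → H) : Prop :=
  ∀ N : Set ℕ, clSpan (x '' N ∪ y '' Nᶜ) = ⊤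

lemma projS_eq_starProjection (s : Set H) : projS s = (clSpan s).starProjection := rfl

omit [CompleteSpace H] in
lemma subset_clSpan (s : Set H) : s ⊆ clSpan s :=
  Submodule.subset_span.trans (Submodule.le_topologicalClosure _)

omit [CompleteSpace H] in
lemma clSpan_orthogonal (s : Set H) : (clSpan s)ᗮ = (Submodule.span ℂ s)ᗮ :=
  Submodule.orthogonal_closure _

omit [CompleteSpace H] in
lemma mem_orthogonal_span_iff {s : Set H} {w : H} :
    w ∈ (Submodule.span ℂ s)ᗮ ↔ ∀ u ∈ s, ⟪u, w⟫ = 0 := by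
  rw [← Submodule.span_singleton_le_iff_mem, ← Submodule.isOrtho_iff_le, Submodule.isOrtho_comm,
    Submodule.isOrtho_span]
  simp

lemma IsCompleteSystem.eq_zero_of_inner_eq_zero {x : ℕ → H} (hc : IsCompleteSystem x) {w : H}
    (hw : ∀ k, ⟪x k, w⟫ = 0) : w = 0 := by
  have hw' : w ∈ (Submodule.span ℂ (Set.range x))ᗮ :=
    mem_orthogonal_span_iff.2 (Set.forall_mem_range.2 hw)
  rwa [Submodule.topologicalClosure_eq_top_iff.1 hc] at hw'

lemma projS_image_apply_of_mem (x : ℕ → H) {σ : Set ℕ} {k : ℕ} (hk : k ∈ σ) :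
    projS (x '' σ) (x k) = x k :=
  Submodule.starProjection_eq_self_iff.2 (subset_clSpan _ ⟨k, hk, rfl⟩)

lemma ClusterPt.apply_eq_of_eventually_eq {ι X Y : Type*} [TopologicalSpace Y] [T1Space Y]
    {l : Filter ι} {F : ι → X → Y} {Φ : X → Y} (h : ClusterPt Φ (Filter.map F l)) {u : X} {c : Y}
    (hF : ∀ᶠ i in l, F i u = c) : Φ u = c := by
  have hu : ClusterPt (Φ u) (pure c) :=
    (h.map (continuous_apply u).continuousAt tendsto_map).mono
      (by rw [map_map]; exact tendsto_pure.2 hF)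
  exact (specializes_iff_eq.1 (specializes_iff_clusterPt.2 hu)).symm

namespace IsBiorthogonal

variable {x y : ℕ → H}

omit [CompleteSpace H] in
lemma inner_sum_smul (hbi : IsBiorthogonal x y) (c : ℕ → ℂ) (n k : ℕ) :
    ⟪x k, ∑ j ∈ Finset.range n, c j • y j⟫ = if k < n then c k else 0 := by
  simp [hbi k]

lemma eq_sum_of_inner_eq_zero (hbi : IsBiorthogonal x y) (hc : IsCompleteSystem x) {n : ℕ}
    {w : H} (hw : ∀ k, n ≤ k → ⟪x k, w⟫ = 0) :
    w = ∑ j ∈ Finset.range n, ⟪x j, w⟫ • y j := by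
  rw [← sub_eq_zero]
  refine hc.eq_zero_of_inner_eq_zero fun k => ?_
  rw [inner_sub_right, hbi.inner_sum_smul]
  split_ifs with hk
  · exact sub_self _
  · rw [hw k (not_lt.1 hk), sub_zero]

lemma projS_image_apply_eq_zero_iff (hbi : IsBiorthogonal x y) {σ : Set ℕ} {k : ℕ} :
    projS (x '' σ) (y k) = 0 ↔ k ∉ σ := by
  rw [projS_eq_starProjection, Submodule.starProjection_apply_eq_zero_iff, clSpan_orthogonal,
    mem_orthogonal_span_iff, Set.forall_mem_image]
  refine ⟨fun h hk => ?_, fun hk j hj => ?_⟩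
  · simpa [hbi k k] using h hk
  · rw [hbi j k, if_neg (ne_of_mem_of_not_mem hj hk)]

lemma tendsto_projS_image_apply (hbi : IsBiorthogonal x y) {σ₀ : Set ℕ}
    (hσ₀ : clSpan (x '' σ₀ ∪ y '' σ₀ᶜ) = ⊤) {l : Filter (Set ℕ)}
    (hl : ∀ k, ∀ᶠ σ in l, (k ∈ σ ↔ k ∈ σ₀)) (v : H) :
    Tendsto (fun σ => projS (x '' σ) v) l (𝓝 (projS (x '' σ₀) v)) := by
  let S : Set H := {v | Tendsto (fun σ => projS (x '' σ) v) l (𝓝 (projS (x '' σ₀) v))}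
  have hS : IsClosed S :=
    ((LipschitzWith.uniformEquicontinuous _ 1 fun σ =>
      (clSpan (x '' σ)).lipschitzWith_starProjection).equicontinuous).isClosed_setOfPred_tendsto
      (projS _).continuous
  have hspan : (Submodule.span ℂ (x '' σ₀ ∪ y '' σ₀ᶜ) : Set H) ⊆ S := by
    intro w hw
    induction hw using Submodule.span_induction with
    | mem u hu =>
      rcases hu with ⟨k, hk, rfl⟩ | ⟨k, hk, rfl⟩
      · exact tendsto_const_nhds.congr' ((hl k).mono fun σ hσ =>
          (projS_image_apply_of_mem x hk).trans (projS_image_apply_of_mem x (hσ.2 hk)).symm)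
      · exact tendsto_const_nhds.congr' ((hl k).mono fun σ hσ =>
          (hbi.projS_image_apply_eq_zero_iff.2 hk).trans
            (hbi.projS_image_apply_eq_zero_iff.2 (mt hσ.1 hk)).symm)
    | zero => simpa [S] using tendsto_const_nhds
    | add u w _ _ hu hw => simpa [S] using hu.add hw
    | smul a u _ hu => simpa [S] using hu.const_smul a
  have hv : v ∈ closure (Submodule.span ℂ (x '' σ₀ ∪ y '' σ₀ᶜ) : Set H) := by
    rw [← Submodule.topologicalClosure_coe]
    exact (hσ₀ ▸ Submodule.mem_top : v ∈ clSpan _)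
  exact hS.closure_subset_iff.2 hspan hv

lemma isCompact_range_projS (hbi : IsBiorthogonal x y) (hH : IsHereditarilyComplete x y) :
    IsCompact (Set.range fun σ : Set ℕ => fun v : H => projS (x '' σ) v) := by
  have hsurj : Function.Surjective fun χ : ℕ → Bool => {k | χ k = true} := by
    classical
    exact fun σ => ⟨fun k => decide (k ∈ σ), by simp⟩
  rw [← hsurj.range_comp]
  refine isCompact_range (continuous_pi fun v => continuous_iff_continuousAt.2 fun χ₀ => ?_)
  refine (hbi.tendsto_projS_image_apply (hH _) (fun k => eventually_map.2 ?_) v).comp tendsto_map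
  filter_upwards [(continuous_apply k).continuousAt.eventually_mem
    ((isOpen_discrete {χ₀ k}).mem_nhds rfl)] with χ hχ
  simp only [Set.mem_singleton_iff.1 hχ]

lemma mem_clSpan_image_union_Ici (hbi : IsBiorthogonal x y) (hc : IsCompleteSystem x)
    {N : Set ℕ} {v : H} (hv : v ∈ (Submodule.span ℂ (x '' N ∪ y '' Nᶜ))ᗮ) (n : ℕ) :
    v ∈ clSpan (x '' (N ∪ Set.Ici n)) := by
  rw [← Submodule.orthogonal_orthogonal (clSpan _), Submodule.mem_orthogonal]
  intro w hw
  have hxw : ∀ k ∈ N ∪ Set.Ici n, ⟪x k, w⟫ = 0 := fun k hk =>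
    Submodule.inner_right_of_mem_orthogonal
      (subset_clSpan (x '' (N ∪ Set.Ici n)) ⟨k, hk, rfl⟩) hw
  rw [hbi.eq_sum_of_inner_eq_zero hc fun k hk => hxw k (Or.inr hk), sum_inner]
  refine Finset.sum_eq_zero fun j _ => ?_
  rw [inner_smul_left]
  by_cases hj : j ∈ N
  · rw [hxw j (Or.inl hj), map_zero, zero_mul]
  · rw [mem_orthogonal_span_iff.1 hv _ (Or.inr ⟨j, hj, rfl⟩), mul_zero]

lemma isHereditarilyComplete_of_isCompact (hbi : IsBiorthogonal x y) (hc : IsCompleteSystem x)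
    (hΩ : IsCompact (Set.range fun σ : Set ℕ => fun v : H => projS (x '' σ) v)) :
    IsHereditarilyComplete x y := by
  intro N
  refine Submodule.topologicalClosure_eq_top_iff.2 ((Submodule.eq_bot_iff _).2 fun v hv => ?_)
  obtain ⟨_, ⟨τ, rfl⟩, hτ⟩ :=
    hΩ (f := map (fun n => fun w : H => projS (x '' (N ∪ Set.Ici n)) w) atTop)
      (le_principal_iff.2 (mem_map.2 (Eventually.of_forall fun n => Set.mem_range_self _)))
  have hτN : τ ⊆ N := by
    intro k hk
    by_contra hkN
    have hPy : projS (x '' τ) (y k) = 0 :=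
      hτ.apply_eq_of_eventually_eq <| (eventually_gt_atTop k).mono fun n hn =>
        hbi.projS_image_apply_eq_zero_iff.2 (by simp [hkN, not_le.2 hn])
    exact hbi.projS_image_apply_eq_zero_iff.1 hPy hk
  have hvτ : v ∈ clSpan (x '' τ) :=
    Submodule.starProjection_eq_self_iff.1 (hτ.apply_eq_of_eventually_eq (Eventually.of_forall
      fun n => Submodule.starProjection_eq_self_iff.2 (hbi.mem_clSpan_image_union_Ici hc hv n)))
  have hv_perp : v ∈ (clSpan (x '' τ))ᗮ := by
    rw [clSpan_orthogonal]
    exact Submodule.orthogonal_le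
      (Submodule.span_mono (Set.subset_union_of_subset_left (Set.image_mono hτN) _)) hv
  exact inner_self_eq_zero.1 (Submodule.inner_right_of_mem_orthogonal hvτ hv_perp)

end IsBiorthogonal

theorem hereditarily_complete_iff_compact_projections_general
    (x y : ℕ → H) (hc : IsCompleteSystem x)
    (hbi : IsBiorthogonal x y) :
    (∀ N : Set ℕ, clSpan (x '' N ∪ y '' Nᶜ) = ⊤) ↔
      IsCompact (Set.range fun σ : Set ℕ => fun v : H => projS (x '' σ) v) :=
  ⟨hbi.isCompact_range_projS, hbi.isHereditarilyComplete_of_isCompact hc⟩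

/-- A complete minimal system is hereditarily complete iff the family of projections
`Ω = {P_σ : σ ⊆ ℕ}` is compact in the strong operator topology (realized as the topology of
pointwise convergence on `H → H`). -/
theorem hereditarily_complete_iff_compact_projections [TopologicalSpace.SeparableSpace H]
    (x y : ℕ → H) (hc : IsCompleteSystem x) (hmin : IsMinimalSystem x)
    (hbi : IsBiorthogonal x y) (hnorm : ∀ k, ‖x k‖ = 1) :
    (∀ N : Set ℕ, clSpan (x '' N ∪ y '' Nᶜ) = ⊤) ↔
      IsCompact (Set.range fun σ : Set ℕ => fun v : H => projS (x '' σ) v) :=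
  hereditarily_complete_iff_compact_projections_general x y hc hbi
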